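/- Let N ≥ 2, c > 0, b ∈ (0,1), γ ∈ [0,1). Define x*₁ = c / Σ_{i=1}^{N} (b^{1−γ} + (i/N)(1−b^{1−γ}))^{1/(1−γ)}, x*_n = x*₁ · (b^{1−γ} + ((N−n+1)/N)(1−b^{1−γ}))^{1/(1−γ)} for n = 2,…,N, and Δ* = (x*₁)^{1−γ}(1−b^{1−γ}) / (N(1−γ)). Then: (i) Σₙ x*_n = c; (ii) (x*_n)^{1−γ} = (x*_{n+1})^{1−γ} + (1−γ)Δ* for 1 ≤ n ≤ N−1; (iii) (x*_N)^{1−γ} = (b x*₁)^{1−γ} + (1−γ)Δ*; and (iv) x*₁ ≥ x*₂ ≥ … ≥ x*_N > b x*₁ > 0. -/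
import Mathlib


open Finset in
/-- The explicit vector `x*` (with growth increment `Δ*`) is the fixed point of
the homogeneous G-AIMD index-policy dynamics: it sums to the capacity `c`,
each coordinate grows into the previous one after increment `Δ*`, the last
coordinate is reached from the reduced largest rate `b x*₁`, and the
coordinates are ordered with `x*_N > b x*₁ > 0`.  (Coordinates are indexed by
`Fin N`, the coordinate `i` corresponding to `n = i + 1`.) -/
theorem gaimd_index_fixed_point
    (N : ℕ) (hN : 2 ≤ N) (c b γ : ℝ) (hc : 0 < c)
    (hb : b ∈ Set.Ioo (0 : ℝ) 1) (hγ : γ ∈ Set.Ico (0 : ℝ) 1)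
    (xstar : Fin N → ℝ)
    (hx1 : xstar ⟨0, by omega⟩ = c / ∑ i ∈ Finset.range N,
      (b ^ (1 - γ) + (((i : ℝ) + 1) / N) * (1 - b ^ (1 - γ))) ^ (1 / (1 - γ)))
    (hxn : ∀ i : Fin N, 0 < (i : ℕ) → xstar i = xstar ⟨0, by omega⟩ *
      (b ^ (1 - γ) + (((N : ℝ) - (i : ℕ)) / N) * (1 - b ^ (1 - γ))) ^ (1 / (1 - γ)))
    (Δstar : ℝ)
    (hΔ : Δstar = (xstar ⟨0, by omega⟩) ^ (1 - γ) * (1 - b ^ (1 - γ)) / (N * (1 - γ))) :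
    ∑ i, xstar i = c
    ∧ (∀ i : Fin N, ∀ h : (i : ℕ) + 1 < N,
        (xstar i) ^ (1 - γ) = (xstar ⟨(i : ℕ) + 1, h⟩) ^ (1 - γ) + (1 - γ) * Δstar)
    ∧ (xstar ⟨N - 1, by omega⟩) ^ (1 - γ)
        = (b * xstar ⟨0, by omega⟩) ^ (1 - γ) + (1 - γ) * Δstar
    ∧ (∀ i j : Fin N, i ≤ j → xstar j ≤ xstar i)
    ∧ b * xstar ⟨0, by omega⟩ < xstar ⟨N - 1, by omega⟩
    ∧ 0 < b * xstar ⟨0, by omega⟩ := by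
  obtain ⟨hb0, hb1⟩ := hb
  obtain ⟨hγ0, hγ1⟩ := hγ
  have h1γ : (0:ℝ) < 1 - γ := by linarith
  have hN0 : 0 < N := by omega
  have hNR : (0:ℝ) < N := by exact_mod_cast hN0
  set β := b ^ (1 - γ) with hβdef
  have hβ0 : 0 < β := Real.rpow_pos_of_pos hb0 _
  have hβ1 : β < 1 := Real.rpow_lt_one hb0.le hb1 (by linarith)
  set e := 1 / (1 - γ) with hedef
  have he : 0 < e := by positivity
  have hee : e * (1 - γ) = 1 := by
    rw [hedef]; field_simp
  set T : ℕ → ℝ := fun k => β + (((N:ℝ) - k) / N) * (1 - β) with hTdef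
  have hTpos : ∀ k : ℕ, k < N → 0 < T k := by
    intro k hk
    have hk' : (k:ℝ) ≤ N := by exact_mod_cast hk.le
    have h1 : (0:ℝ) ≤ ((N:ℝ) - k) / N := div_nonneg (by linarith) hNR.le
    have h2 : (0:ℝ) ≤ (((N:ℝ) - k) / N) * (1 - β) := mul_nonneg h1 (by linarith)
    simp only [hTdef]; linarith
  set S := ∑ i ∈ Finset.range N, (β + (((i:ℝ) + 1) / N) * (1 - β)) ^ e with hSdef
  have hS0 : 0 < S := by
    apply Finset.sum_pos
    · intro i hi
      apply Real.rpow_pos_of_pos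
      have h1 : (0:ℝ) ≤ (((i:ℝ)+1)/N) * (1 - β) :=
        mul_nonneg (by positivity) (by linarith)
      linarith
    · exact ⟨0, Finset.mem_range.mpr hN0⟩
  set x1 := xstar ⟨0, hN0⟩ with hx1def
  have hx1S : x1 = c / S := hx1
  have hx1pos : 0 < x1 := by rw [hx1S]; exact div_pos hc hS0
  have hΔ' : Δstar = x1 ^ (1 - γ) * (1 - β) / (N * (1 - γ)) := hΔ
  have hT0 : T 0 = 1 := by
    simp only [hTdef]
    rw [Nat.cast_zero, sub_zero, div_self hNR.ne']
    ring
  have hxT : ∀ i : Fin N, xstar i = x1 * (T i) ^ e := by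
    intro i
    rcases Nat.eq_zero_or_pos (i:ℕ) with h0 | hpos
    · have hi : i = ⟨0, hN0⟩ := Fin.ext h0
      rw [hi]
      simp only [hT0, Real.one_rpow, mul_one, hx1def]
    · exact hxn i hpos
  have hpow : ∀ i : Fin N, (xstar i) ^ (1 - γ) = x1 ^ (1 - γ) * T i := by
    intro i
    rw [hxT i, Real.mul_rpow hx1pos.le (Real.rpow_nonneg (hTpos i i.isLt).le e),
      ← Real.rpow_mul (hTpos i i.isLt).le, hee, Real.rpow_one]
  -- sum
  have hsumT : ∑ i ∈ Finset.range N, (T i) ^ e = S := by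
    rw [hSdef, ← Finset.sum_range_reflect (fun j => (β + (((j:ℝ) + 1) / N) * (1 - β)) ^ e) N]
    apply Finset.sum_congr rfl
    intro j hj
    have hj' : j < N := Finset.mem_range.mp hj
    have hcast : ((N - 1 - j : ℕ) : ℝ) = (N:ℝ) - 1 - j := by
      have h1 : N - 1 - j = N - (1 + j) := by omega
      rw [h1, Nat.cast_sub (by omega)]
      push_cast; ring
    simp only [hTdef]
    rw [hcast]
    ring_nf
  have part1 : ∑ i, xstar i = c := by
    calc ∑ i, xstar i = ∑ i : Fin N, x1 * (T i) ^ e :=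
          Finset.sum_congr rfl (fun i _ => hxT i)
    _ = ∑ i ∈ Finset.range N, x1 * (T i) ^ e :=
          Fin.sum_univ_eq_sum_range (fun k => x1 * (T k) ^ e) N
    _ = x1 * ∑ i ∈ Finset.range N, (T i) ^ e := by rw [Finset.mul_sum]
    _ = c := by rw [hsumT, hx1S, div_mul_cancel₀ c hS0.ne']
  -- part 2
  have part2 : ∀ i : Fin N, ∀ h : (i : ℕ) + 1 < N,
      (xstar i) ^ (1 - γ) = (xstar ⟨(i : ℕ) + 1, h⟩) ^ (1 - γ) + (1 - γ) * Δstar := by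
    intro i h
    rw [hpow i, hpow ⟨(i:ℕ) + 1, h⟩, hΔ']
    simp only [hTdef]
    push_cast
    field_simp
    ring
  -- part 3
  have hlast : (N - 1 : ℕ) < N := by omega
  have hlastcast : ((N - 1 : ℕ) : ℝ) = (N:ℝ) - 1 := by
    rw [Nat.cast_sub (by omega)]; norm_num
  have part3 : (xstar ⟨N - 1, hlast⟩) ^ (1 - γ)
      = (b * x1) ^ (1 - γ) + (1 - γ) * Δstar := by
    rw [hpow ⟨N - 1, hlast⟩, hΔ', Real.mul_rpow hb0.le hx1pos.le, ← hβdef]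
    simp only [hTdef]
    rw [hlastcast]
    field_simp
    ring
  -- part 4
  have part4 : ∀ i j : Fin N, i ≤ j → xstar j ≤ xstar i := by
    intro i j hij
    rw [hxT i, hxT j]
    apply mul_le_mul_of_nonneg_left _ hx1pos.le
    apply Real.rpow_le_rpow (hTpos j j.isLt).le _ he.le
    simp only [hTdef]
    have hij' : ((i:ℕ):ℝ) ≤ ((j:ℕ):ℝ) := by exact_mod_cast hij
    have h2 : ((N:ℝ) - ((j:ℕ):ℝ))/N ≤ ((N:ℝ) - ((i:ℕ):ℝ))/N :=
      (div_le_div_iff_of_pos_right hNR).mpr (by linarith)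
    have h3 := mul_le_mul_of_nonneg_right h2 (show (0:ℝ) ≤ 1 - β by linarith)
    linarith
  -- part 5
  have hbe : β ^ e = b := by
    rw [hβdef, ← Real.rpow_mul hb0.le, mul_comm (1 - γ) e, hee, Real.rpow_one]
  have hTlt : β < T (N - 1) := by
    simp only [hTdef]
    rw [hlastcast]
    have h1 : (0:ℝ) < ((N:ℝ) - ((N:ℝ) - 1)) / N := by
      rw [show (N:ℝ) - ((N:ℝ) - 1) = 1 by ring]
      positivity
    nlinarith
  have part5 : b * x1 < xstar ⟨N - 1, hlast⟩ := by
    rw [hxT ⟨N - 1, hlast⟩, ← hbe, mul_comm (β ^ e) x1]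
    exact mul_lt_mul_of_pos_left (Real.rpow_lt_rpow hβ0.le hTlt he) hx1pos
  have part6 : 0 < b * x1 := mul_pos hb0 hx1pos
  exact ⟨part1, part2, part3, part4, part5, part6⟩
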